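/- arXiv:1905.03654 — 2 statements merged into one kernel-verified Lean document; each statement's English description precedes it below -/
import Mathlib

section
/- For a tree with n ≥ 2 vertices and sum of squared degrees K = Σ_i k_i^2, the variance of the sum of edge lengths D in a uniformly random linear arrangement is V[D] = ((n+1)/45)[(n-1)^2 + (n/4 - 1) K]. -/
/-!
Write `2D = Σ_{u ~ v} |π u - π v|`, each edge counted in both directions. For distinct vertices
the averages over `π` of `|π u - π v|`, `|π u - π v|²`, `|π u - π v| |π u - π y|` and
`|π u - π v| |π x - π y|` depend only on `n`. Each is found by summing the unknown over one free
vertex, which replaces a factor `|π w - π y|` by the row sum `Σ_j |π w - j|`, a function of `π w`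
alone, and leaves quantities already known. Two edges are equal, share one endpoint, or are
disjoint, so expanding `E[D²]` over pairs of edges expresses it through `m = n - 1` and
`K = Σ_i k_i²`, and subtracting `E[D]²` gives the formula.
-/

open Finset Equiv

namespace LinearArrangement

section PermutationSums

variable {α : Type*} [Fintype α] [DecidableEq α] {R : Type*} [Ring R]

lemma sum_univ_eq_sum_add_of_eq_of_notMem (s : Finset α) {f : α → R} {c : R}
    (h : ∀ y ∉ s, f y = c) :
    ∑ y, f y = ∑ y ∈ s, f y + (Fintype.card α - #s) * c := by
  rw [← sum_add_sum_compl s f, sum_congr rfl fun y hy => h y (mem_compl.mp hy), sum_const,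
    card_compl, nsmul_eq_mul, Nat.cast_sub (card_le_univ s)]

lemma sum_perm_congr_mul_right {M : Type*} [AddCommMonoid M] (σ : Perm α) {F G : Perm α → M}
    (h : ∀ π, F (π * σ) = G π) : ∑ π, F π = ∑ π, G π := by
  rw [← Equiv.sum_comp (Equiv.mulRight σ) F]
  exact sum_congr rfl fun π _ => h π

lemma sum_perm_sum_apply {M : Type*} [AddCommMonoid M] (f : Perm α → α → M) :
    ∑ π : Perm α, ∑ y, f π (π y) = ∑ π : Perm α, ∑ j, f π j :=
  sum_congr rfl fun π _ => Equiv.sum_comp π (f π)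

lemma card_mul_sum_perm_apply (ρ : α → R) (x : α) :
    Fintype.card α * ∑ π : Perm α, ρ (π x) = (Fintype.card α).factorial * ∑ i, ρ i := by
  have hx : ∀ y, ∑ π : Perm α, ρ (π y) = ∑ π : Perm α, ρ (π x) := fun y =>
    sum_perm_congr_mul_right (swap x y) fun π => by simp
  calc Fintype.card α * ∑ π : Perm α, ρ (π x)
      = ∑ y, ∑ π : Perm α, ρ (π y) := by simp [hx]
    _ = ∑ π : Perm α, ∑ i, ρ i := by rw [sum_comm, sum_perm_sum_apply fun _ => ρ]
    _ = (Fintype.card α).factorial * ∑ i, ρ i := by simp [Fintype.card_perm]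

lemma card_mul_card_sub_one_mul_sum_perm_apply {φ : α → α → R} (hφ : ∀ i, φ i i = 0)
    {u v : α} (huv : u ≠ v) :
    Fintype.card α * (Fintype.card α - 1) * ∑ π : Perm α, φ (π u) (π v)
      = (Fintype.card α).factorial * ∑ i, ∑ j, φ i j := by
  have hv : ∀ y ∉ ({u} : Finset α), ∑ π : Perm α, φ (π u) (π y) = ∑ π : Perm α, φ (π u) (π v) :=
    fun y hy => sum_perm_congr_mul_right (swap v y) fun π => by
      simp [swap_apply_of_ne_of_ne huv (Ne.symm (mem_singleton.not.mp hy))]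
  have hrow : ∑ y, ∑ π : Perm α, φ (π u) (π y)
      = (Fintype.card α - 1) * ∑ π : Perm α, φ (π u) (π v) := by
    rw [sum_univ_eq_sum_add_of_eq_of_notMem _ hv]; simp [hφ]
  rw [mul_assoc, ← hrow, sum_comm, sum_perm_sum_apply fun π j => φ (π u) j,
    card_mul_sum_perm_apply (fun i => ∑ j, φ i j)]

end PermutationSums

def gap (a b : ℕ) : ℚ := |(a : ℚ) - b|

lemma gap_self (a : ℕ) : gap a a = 0 := by simp [gap]

lemma gap_comm (a b : ℕ) : gap a b = gap b a := abs_sub_comm _ _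

def rowGap (n i : ℕ) : ℚ := ∑ j ∈ range n, gap i j

lemma sum_range_natCast (m : ℕ) : ∑ i ∈ range m, (i : ℚ) = m * (m - 1) / 2 := by
  induction m with
  | zero => simp
  | succ k ih => rw [sum_range_succ, ih]; push_cast; ring

lemma sum_range_natCast_sq (m : ℕ) :
    ∑ i ∈ range m, (i : ℚ) ^ 2 = m * (m - 1) * (2 * m - 1) / 6 := by
  induction m with
  | zero => simp
  | succ k ih => rw [sum_range_succ, ih]; push_cast; ring

lemma sum_range_natCast_pow_three (m : ℕ) :
    ∑ i ∈ range m, (i : ℚ) ^ 3 = m ^ 2 * (m - 1) ^ 2 / 4 := by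
  induction m with
  | zero => simp
  | succ k ih => rw [sum_range_succ, ih]; push_cast; ring

lemma sum_range_natCast_pow_four (m : ℕ) :
    ∑ i ∈ range m, (i : ℚ) ^ 4 = m * (m - 1) * (2 * m - 1) * (3 * m ^ 2 - 3 * m - 1) / 30 := by
  induction m with
  | zero => simp
  | succ k ih => rw [sum_range_succ, ih]; push_cast; ring

lemma rowGap_eq {i n : ℕ} (hi : i ≤ n) : rowGap n i = i ^ 2 - (n - 1) * i + n * (n - 1) / 2 := by
  induction n with
  | zero => simp_all [rowGap]
  | succ k ih =>
    rw [rowGap, sum_range_succ]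
    rcases hi.lt_or_eq with hi | rfl
    · have hik : (i : ℚ) ≤ k := by exact_mod_cast Nat.lt_succ_iff.mp hi
      rw [← rowGap, ih (Nat.lt_succ_iff.mp hi), gap, abs_of_nonpos (by linarith)]
      push_cast; ring
    · have h : ∀ j ∈ range k, gap (k + 1) j = k + 1 - j := fun j hj => by
        have : (j : ℚ) < k := by exact_mod_cast mem_range.mp hj
        rw [gap, abs_of_nonneg (by push_cast; linarith)]; push_cast; ring
      rw [sum_congr rfl h, sum_sub_distrib, sum_range_natCast, sum_const, card_range, gap,
        Nat.cast_succ, add_sub_cancel_left, abs_one, nsmul_eq_mul]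
      ring

lemma sum_range_rowGap (n : ℕ) : ∑ i ∈ range n, rowGap n i = ((n : ℚ) ^ 3 - n) / 3 := by
  rw [sum_congr rfl fun i hi => rowGap_eq (mem_range.mp hi).le]
  simp only [sum_add_distrib, sum_sub_distrib, ← mul_sum, sum_range_natCast_sq, sum_range_natCast,
    sum_const, card_range, nsmul_eq_mul]
  ring

lemma sum_range_sum_range_gap_sq (n : ℕ) :
    ∑ i ∈ range n, ∑ j ∈ range n, gap i j ^ 2 = ((n : ℚ) ^ 4 - n ^ 2) / 6 := by
  simp only [gap, sq_abs, sub_sq, sum_add_distrib, sum_sub_distrib, ← mul_sum, ← sum_mul,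
    sum_range_natCast_sq, sum_range_natCast, sum_const, card_range, nsmul_eq_mul]
  ring

lemma sum_range_rowGap_sq (n : ℕ) :
    ∑ i ∈ range n, rowGap n i ^ 2 = (7 * (n : ℚ) ^ 5 - 15 * n ^ 3 + 8 * n) / 60 := by
  rw [sum_congr rfl fun i hi => by rw [rowGap_eq (mem_range.mp hi).le]]
  have h : ∀ i : ℕ, ((i : ℚ) ^ 2 - (n - 1) * i + n * (n - 1) / 2) ^ 2
      = i ^ 4 - 2 * (n - 1) * i ^ 3 + ((n - 1) ^ 2 + n * (n - 1)) * i ^ 2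
        - n * (n - 1) ^ 2 * i + (n * (n - 1) / 2) ^ 2 := fun i => by ring
  simp only [h, sum_add_distrib, sum_sub_distrib, ← mul_sum, sum_range_natCast_pow_four,
    sum_range_natCast_pow_three, sum_range_natCast_sq, sum_range_natCast, sum_const, card_range,
    nsmul_eq_mul]
  ring

def meanGap (n : ℕ) : ℚ := (n + 1) / 3

def meanGapSq (n : ℕ) : ℚ := n * (n + 1) / 6

def meanGapMulRowGap (n : ℕ) : ℚ := (n + 1) * (7 * n ^ 2 - 8) / 60

def meanGapMulGapAdjacent (n : ℕ) : ℚ := (n + 1) * (7 * n + 4) / 60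

def meanGapMulRowGapDisjoint (n : ℕ) : ℚ := (n + 1) * (10 * n ^ 2 - n - 12) / 90

def meanGapMulGapDisjoint (n : ℕ) : ℚ := (n + 1) * (5 * n + 4) / 45

section Moments

variable {n : ℕ}

lemma sum_fin_sum_fin_eq_sum_range (f : ℕ → ℕ → ℚ) :
    ∑ i : Fin n, ∑ j : Fin n, f i j = ∑ i ∈ range n, ∑ j ∈ range n, f i j := by
  simp only [Fin.sum_univ_eq_sum_range (f _) n,
    Fin.sum_univ_eq_sum_range (fun i => ∑ j ∈ range n, f i j) n]

lemma sum_gap_perm_apply (π : Perm (Fin n)) (u : Fin n) :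
    ∑ y, gap (π u) (π y) = rowGap n (π u) := by
  rw [Equiv.sum_comp π fun j => gap (π u) j]
  exact Fin.sum_univ_eq_sum_range (gap (π u)) n

lemma one_lt_cast_of_ne {u v : Fin n} (h : u ≠ v) : (1 : ℚ) < n := by
  exact_mod_cast (Fintype.card_fin n) ▸ Fintype.one_lt_card_iff.2 ⟨u, v, h⟩

lemma two_lt_cast_of_ne {u v y : Fin n} (huv : u ≠ v) (huy : u ≠ y) (hvy : v ≠ y) :
    (2 : ℚ) < n := by
  exact_mod_cast (Fintype.card_fin n) ▸ Fintype.two_lt_card_iff.2 ⟨u, v, y, huv, huy, hvy⟩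

lemma three_lt_cast_of_ne {u v x y : Fin n} (huv : u ≠ v) (hux : u ≠ x) (huy : u ≠ y)
    (hvx : v ≠ x) (hvy : v ≠ y) (hxy : x ≠ y) : (3 : ℚ) < n := by
  have h := card_le_univ ({u, v, x, y} : Finset (Fin n))
  rw [card_insert_of_notMem (by simp [huv, hux, huy]), card_insert_of_notMem (by simp [hvx, hvy]),
    card_pair hxy, Fintype.card_fin] at h
  exact_mod_cast h

lemma sum_perm_gap {u v : Fin n} (huv : u ≠ v) :
    ∑ π : Perm (Fin n), gap (π u) (π v) = n.factorial * meanGap n := by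
  have key := card_mul_card_sub_one_mul_sum_perm_apply (φ := fun i j : Fin n => gap i j)
    (fun i => gap_self i) huv
  rw [Fintype.card_fin, sum_fin_sum_fin_eq_sum_range gap] at key
  simp only [← rowGap.eq_1, sum_range_rowGap] at key
  have hn := one_lt_cast_of_ne huv
  refine mul_left_cancel₀ (by nlinarith : (n : ℚ) * (n - 1) ≠ 0) (key.trans ?_)
  unfold meanGap; ring

lemma sum_perm_gap_sq {u v : Fin n} (huv : u ≠ v) :
    ∑ π : Perm (Fin n), gap (π u) (π v) ^ 2 = n.factorial * meanGapSq n := by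
  have key := card_mul_card_sub_one_mul_sum_perm_apply (φ := fun i j : Fin n => gap i j ^ 2)
    (fun i => by simp [gap_self]) huv
  rw [Fintype.card_fin, sum_fin_sum_fin_eq_sum_range (gap · · ^ 2),
    sum_range_sum_range_gap_sq] at key
  have hn := one_lt_cast_of_ne huv
  refine mul_left_cancel₀ (by nlinarith : (n : ℚ) * (n - 1) ≠ 0) (key.trans ?_)
  unfold meanGapSq; ring

lemma sum_perm_gap_mul_rowGap {u v : Fin n} (huv : u ≠ v) :
    ∑ π : Perm (Fin n), gap (π u) (π v) * rowGap n (π u) = n.factorial * meanGapMulRowGap n := by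
  have key := card_mul_card_sub_one_mul_sum_perm_apply
    (φ := fun i j : Fin n => gap i j * rowGap n i) (fun i => by simp [gap_self]) huv
  rw [Fintype.card_fin, sum_fin_sum_fin_eq_sum_range (fun i j => gap i j * rowGap n i)] at key
  simp only [← sum_mul, ← rowGap.eq_1, ← sq, sum_range_rowGap_sq] at key
  have hn := one_lt_cast_of_ne huv
  refine mul_left_cancel₀ (by nlinarith : (n : ℚ) * (n - 1) ≠ 0) (key.trans ?_)
  unfold meanGapMulRowGap; ring

lemma sum_perm_gap_mul_gap_of_adjacent {u v y : Fin n} (huv : u ≠ v) (huy : u ≠ y)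
    (hvy : v ≠ y) :
    ∑ π : Perm (Fin n), gap (π u) (π v) * gap (π u) (π y)
      = n.factorial * meanGapMulGapAdjacent n := by
  have hfree : ∀ z ∉ ({u, v} : Finset (Fin n)),
      ∑ π : Perm (Fin n), gap (π u) (π v) * gap (π u) (π z)
        = ∑ π : Perm (Fin n), gap (π u) (π v) * gap (π u) (π y) := fun z hz => by
    simp only [mem_insert, mem_singleton, not_or] at hz
    exact sum_perm_congr_mul_right (swap y z) fun π => by
      simp [swap_apply_of_ne_of_ne huy (Ne.symm hz.1), swap_apply_of_ne_of_ne hvy (Ne.symm hz.2)]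
  have key : ∑ z, ∑ π : Perm (Fin n), gap (π u) (π v) * gap (π u) (π z)
      = ∑ π : Perm (Fin n), gap (π u) (π v) * rowGap n (π u) := by
    rw [sum_comm]; simp only [← mul_sum, sum_gap_perm_apply]
  rw [sum_univ_eq_sum_add_of_eq_of_notMem _ hfree, sum_pair huv, sum_perm_gap_mul_rowGap huv,
    card_pair huv, Fintype.card_fin] at key
  simp only [gap_self, mul_zero, sum_const_zero, zero_add, ← sq, sum_perm_gap_sq huv] at key
  have hn := two_lt_cast_of_ne huv huy hvy
  refine mul_left_cancel₀ (by linarith : (n : ℚ) - 2 ≠ 0) ?_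
  unfold meanGapSq meanGapMulRowGap meanGapMulGapAdjacent at *
  linear_combination key

lemma sum_perm_gap_mul_rowGap_of_disjoint {u v x : Fin n} (huv : u ≠ v) (hux : u ≠ x)
    (hvx : v ≠ x) :
    ∑ π : Perm (Fin n), gap (π u) (π v) * rowGap n (π x)
      = n.factorial * meanGapMulRowGapDisjoint n := by
  have hfree : ∀ z ∉ ({u, v} : Finset (Fin n)),
      ∑ π : Perm (Fin n), gap (π u) (π v) * rowGap n (π z)
        = ∑ π : Perm (Fin n), gap (π u) (π v) * rowGap n (π x) := fun z hz => by
    simp only [mem_insert, mem_singleton, not_or] at hz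
    exact sum_perm_congr_mul_right (swap x z) fun π => by
      simp [swap_apply_of_ne_of_ne hux (Ne.symm hz.1), swap_apply_of_ne_of_ne hvx (Ne.symm hz.2)]
  have hrow : ∀ π : Perm (Fin n), ∑ z, rowGap n (π z) = ((n : ℚ) ^ 3 - n) / 3 := fun π => by
    rw [Equiv.sum_comp π (fun i => rowGap n i), Fin.sum_univ_eq_sum_range (rowGap n),
      sum_range_rowGap]
  have key : ∑ z, ∑ π : Perm (Fin n), gap (π u) (π v) * rowGap n (π z)
      = ((n : ℚ) ^ 3 - n) / 3 * (n.factorial * meanGap n) := by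
    rw [sum_comm]; simp only [← mul_sum, hrow, ← sum_mul, sum_perm_gap huv]; ring
  have hvu : ∑ π : Perm (Fin n), gap (π u) (π v) * rowGap n (π v)
      = n.factorial * meanGapMulRowGap n := by
    rw [← sum_perm_gap_mul_rowGap huv.symm]
    exact sum_congr rfl fun π _ => by rw [gap_comm]
  rw [sum_univ_eq_sum_add_of_eq_of_notMem _ hfree, sum_pair huv, sum_perm_gap_mul_rowGap huv, hvu,
    card_pair huv, Fintype.card_fin] at key
  have hn := two_lt_cast_of_ne huv hux hvx
  refine mul_left_cancel₀ (by linarith : (n : ℚ) - 2 ≠ 0) ?_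
  unfold meanGap meanGapMulRowGap meanGapMulRowGapDisjoint at *
  linear_combination key

lemma sum_perm_gap_mul_gap_of_disjoint {u v x y : Fin n} (huv : u ≠ v) (hux : u ≠ x)
    (huy : u ≠ y) (hvx : v ≠ x) (hvy : v ≠ y) (hxy : x ≠ y) :
    ∑ π : Perm (Fin n), gap (π u) (π v) * gap (π x) (π y)
      = n.factorial * meanGapMulGapDisjoint n := by
  have hfree : ∀ z ∉ ({u, v, x} : Finset (Fin n)),
      ∑ π : Perm (Fin n), gap (π u) (π v) * gap (π x) (π z)
        = ∑ π : Perm (Fin n), gap (π u) (π v) * gap (π x) (π y) := fun z hz => by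
    simp only [mem_insert, mem_singleton, not_or] at hz
    exact sum_perm_congr_mul_right (swap y z) fun π => by
      simp [swap_apply_of_ne_of_ne huy (Ne.symm hz.1), swap_apply_of_ne_of_ne hvy (Ne.symm hz.2.1),
        swap_apply_of_ne_of_ne hxy (Ne.symm hz.2.2)]
  have key : ∑ z, ∑ π : Perm (Fin n), gap (π u) (π v) * gap (π x) (π z)
      = n.factorial * meanGapMulRowGapDisjoint n := by
    rw [sum_comm]; simp only [← mul_sum, sum_gap_perm_apply]
    exact sum_perm_gap_mul_rowGap_of_disjoint huv hux hvx
  have hu : ∑ π : Perm (Fin n), gap (π u) (π v) * gap (π x) (π u)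
      = n.factorial * meanGapMulGapAdjacent n := by
    rw [← sum_perm_gap_mul_gap_of_adjacent huv hux hvx]
    exact sum_congr rfl fun π _ => by rw [gap_comm (π x : ℕ)]
  have hv : ∑ π : Perm (Fin n), gap (π u) (π v) * gap (π x) (π v)
      = n.factorial * meanGapMulGapAdjacent n := by
    rw [← sum_perm_gap_mul_gap_of_adjacent huv.symm hvx hux]
    exact sum_congr rfl fun π _ => by rw [gap_comm (π u : ℕ), gap_comm (π x : ℕ)]
  rw [sum_univ_eq_sum_add_of_eq_of_notMem _ hfree, sum_insert (by simp [huv, hux]), sum_pair hvx,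
    hu, hv, card_insert_of_notMem (by simp [huv, hux]), card_pair hvx, Fintype.card_fin] at key
  simp only [gap_self, mul_zero, sum_const_zero, add_zero] at key
  have hn := three_lt_cast_of_ne huv hux huy hvx hvy hxy
  refine mul_left_cancel₀ (by linarith : (n : ℚ) - 3 ≠ 0) ?_
  unfold meanGapMulGapAdjacent meanGapMulRowGapDisjoint meanGapMulGapDisjoint at *
  linear_combination key

end Moments

section Graph

variable {V : Type*} [Fintype V] (G : SimpleGraph V) [DecidableRel G.Adj]
  {R : Type*} [CommSemiring R]

lemma sum_sum_ite_adj_left (f : V → R) :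
    ∑ x, ∑ z, (if G.Adj x z then f x else 0) = ∑ x, G.degree x * f x := by
  refine sum_congr rfl fun x _ => ?_
  rw [← sum_filter, sum_const, ← G.neighborFinset_eq_filter, G.card_neighborFinset_eq_degree,
    nsmul_eq_mul]

lemma sum_sum_ite_adj_right (f : V → R) :
    ∑ x, ∑ z, (if G.Adj x z then f z else 0) = ∑ z, G.degree z * f z := by
  rw [sum_comm, ← sum_sum_ite_adj_left]
  simp only [G.adj_comm]

lemma sum_degree_cast : ∑ x, (G.degree x : R) = 2 * #G.edgeFinset := by
  simpa using congrArg (Nat.cast (R := R)) G.sum_degrees_eq_twice_card_edges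

lemma sum_sum_ite_adj_add_mul_degree_add_degree (a b : R) :
    ∑ x, ∑ z, (if G.Adj x z then a + b * (G.degree x + G.degree z) else 0)
      = 2 * #G.edgeFinset * a + 2 * b * ∑ x, (G.degree x : R) ^ 2 := by
  simp only [mul_add, ite_add_zero, sum_add_distrib, sum_sum_ite_adj_left G (fun _ => a),
    sum_sum_ite_adj_left G (fun x => b * G.degree x),
    sum_sum_ite_adj_right G (fun z => b * G.degree z), ← sum_mul, sum_degree_cast]
  rw [← two_mul, mul_sum, mul_sum]
  congr 1
  exact sum_congr rfl fun x _ => by ring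

variable [DecidableEq V]

lemma sum_sum_ite_adj_ite_eq_and_eq (u v : V) :
    ∑ x, ∑ z, (if G.Adj x z then (if x = u ∧ z = v then (1 : R) else 0) else 0)
      = if G.Adj u v then 1 else 0 := by
  rw [Fintype.sum_eq_single u fun x hx => by simp [hx],
    Fintype.sum_eq_single v fun z hz => by simp [hz]]
  simp

/-- The average of `|π u - π v| |π x - π z|` for edges `uv`, `xz`: `meanGapSq` if they are the
same edge, `meanGapMulGapAdjacent` if they share one endpoint, `meanGapMulGapDisjoint` otherwise,
written as an affine function of the coincidences of endpoints. -/
def overlapMean (n : ℕ) (u v x z : V) : ℚ :=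
  meanGapMulGapDisjoint n
    + (meanGapMulGapAdjacent n - meanGapMulGapDisjoint n)
      * ((if x = u then 1 else 0) + (if x = v then 1 else 0)
        + (if z = u then 1 else 0) + (if z = v then 1 else 0))
    + (meanGapSq n - 2 * meanGapMulGapAdjacent n + meanGapMulGapDisjoint n)
      * ((if x = u ∧ z = v then 1 else 0) + (if x = v ∧ z = u then 1 else 0))

lemma sum_sum_ite_adj_overlapMean (n : ℕ) (u v : V) :
    ∑ x, ∑ z, (if G.Adj x z then overlapMean n u v x z else 0)
      = 2 * #G.edgeFinset * meanGapMulGapDisjoint n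
        + 2 * (meanGapMulGapAdjacent n - meanGapMulGapDisjoint n) * (G.degree u + G.degree v)
        + 2 * (meanGapSq n - 2 * meanGapMulGapAdjacent n + meanGapMulGapDisjoint n)
          * (if G.Adj u v then 1 else 0) := by
  simp only [overlapMean, ite_add_zero, ← mul_ite_zero, sum_add_distrib, ← mul_sum]
  simp only [sum_sum_ite_adj_ite_eq_and_eq, G.adj_comm v u, sum_sum_ite_adj_left,
    sum_sum_ite_adj_right G, ← sum_mul, sum_degree_cast]
  simp only [mul_ite, mul_one, mul_zero, sum_ite_eq', mem_univ, if_true]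
  split_ifs <;> ring

end Graph

section Arrangement

variable {n : ℕ}

lemma sum_perm_gap_mul_gap {u v x z : Fin n} (huv : u ≠ v) (hxz : x ≠ z) :
    ∑ π : Perm (Fin n), gap (π u) (π v) * gap (π x) (π z)
      = n.factorial * overlapMean n u v x z := by
  unfold overlapMean
  by_cases hxu : x = u
  · subst x
    by_cases hzv : z = v
    · subst z
      simp only [← sq, sum_perm_gap_sq huv]
      congr 1; simp [huv, huv.symm]; ring
    · rw [sum_perm_gap_mul_gap_of_adjacent huv hxz (Ne.symm hzv)]
      congr 1; simp [huv, hzv, hxz.symm]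
  by_cases hxv : x = v
  · subst x
    by_cases hzu : z = u
    · subst z
      have h := sum_perm_gap_sq huv
      simp only [sq, gap_comm] at h ⊢
      rw [h]; congr 1; simp [huv, huv.symm]; ring
    · have h := sum_perm_gap_mul_gap_of_adjacent huv.symm hxz (Ne.symm hzu)
      simp only [gap_comm] at h ⊢
      rw [h]; congr 1; simp [huv.symm, hzu, hxz.symm]
  by_cases hzu : z = u
  · subst z
    have h := sum_perm_gap_mul_gap_of_adjacent huv (Ne.symm hxu) (Ne.symm hxv)
    simp only [gap_comm] at h ⊢
    rw [h]; congr 1; simp [huv, hxu, hxv]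
  by_cases hzv : z = v
  · subst z
    have h := sum_perm_gap_mul_gap_of_adjacent huv.symm (Ne.symm hxv) (Ne.symm hxu)
    simp only [gap_comm] at h ⊢
    rw [h]; congr 1; simp [huv.symm, hxu, hxv]
  rw [sum_perm_gap_mul_gap_of_disjoint huv (Ne.symm hxu) (Ne.symm hzu) (Ne.symm hxv)
    (Ne.symm hzv) hxz]
  simp [hxu, hxv, hzu, hzv]

variable (G : SimpleGraph (Fin n)) [DecidableRel G.Adj]

/-- Twice the total edge length `D` of the arrangement `π`: each edge is counted from both ends. -/
def dartGapSum (π : Perm (Fin n)) : ℚ := ∑ u, ∑ v, if G.Adj u v then gap (π u) (π v) else 0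

lemma sum_perm_dartGapSum :
    ∑ π : Perm (Fin n), dartGapSum G π = n.factorial * (2 * #G.edgeFinset * meanGap n) := by
  have h : ∀ u v, (∑ π : Perm (Fin n), if G.Adj u v then gap (π u) (π v) else 0)
      = if G.Adj u v then n.factorial * meanGap n else 0 := fun u v => by
    split_ifs with huv
    · exact sum_perm_gap (G.ne_of_adj huv)
    · exact sum_const_zero
  unfold dartGapSum
  rw [sum_comm]
  simp only [sum_comm (s := (univ : Finset (Perm (Fin n)))), h, sum_sum_ite_adj_left, ← sum_mul,
    sum_degree_cast]
  ring

lemma sum_sum_ite_adj_sum_perm_gap_mul_gap {u v : Fin n} (huv : G.Adj u v) :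
    ∑ x, ∑ z,
        (if G.Adj x z then ∑ π : Perm (Fin n), gap (π u) (π v) * gap (π x) (π z) else 0)
      = n.factorial * (2 * (#G.edgeFinset * meanGapMulGapDisjoint n
          + (meanGapSq n - 2 * meanGapMulGapAdjacent n + meanGapMulGapDisjoint n))
        + 2 * (meanGapMulGapAdjacent n - meanGapMulGapDisjoint n) * (G.degree u + G.degree v)) := by
  have h : ∀ x z,
      (if G.Adj x z then ∑ π : Perm (Fin n), gap (π u) (π v) * gap (π x) (π z) else 0)
        = n.factorial * if G.Adj x z then overlapMean n u v x z else 0 := fun x z => by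
    split_ifs with hxz
    · exact sum_perm_gap_mul_gap (G.ne_of_adj huv) (G.ne_of_adj hxz)
    · exact (mul_zero _).symm
  simp only [h, ← mul_sum, sum_sum_ite_adj_overlapMean, if_pos huv]
  ring

lemma sum_perm_dartGapSum_sq :
    ∑ π : Perm (Fin n), dartGapSum G π ^ 2
      = n.factorial * (4 * #G.edgeFinset * (#G.edgeFinset * meanGapMulGapDisjoint n
          + (meanGapSq n - 2 * meanGapMulGapAdjacent n + meanGapMulGapDisjoint n))
        + 4 * (meanGapMulGapAdjacent n - meanGapMulGapDisjoint n)
          * ∑ u, (G.degree u : ℚ) ^ 2) := by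
  have hsq : ∀ π : Perm (Fin n), dartGapSum G π ^ 2 = ∑ u, ∑ v, if G.Adj u v then
      ∑ x, ∑ z, (if G.Adj x z then gap (π u) (π v) * gap (π x) (π z) else 0) else 0 :=
    fun π => by
      rw [sq]
      nth_rw 1 [dartGapSum]
      simp only [sum_mul, ite_mul, zero_mul]
      simp only [dartGapSum, mul_sum, mul_ite, mul_zero]
  have h : ∀ u v, (if G.Adj u v then ∑ x, ∑ z,
      (if G.Adj x z then ∑ π : Perm (Fin n), gap (π u) (π v) * gap (π x) (π z) else 0) else 0)
      = n.factorial * if G.Adj u v then 2 * (#G.edgeFinset * meanGapMulGapDisjoint n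
          + (meanGapSq n - 2 * meanGapMulGapAdjacent n + meanGapMulGapDisjoint n))
        + 2 * (meanGapMulGapAdjacent n - meanGapMulGapDisjoint n) * (G.degree u + G.degree v)
        else 0 := fun u v => by
    split_ifs with huv
    · exact sum_sum_ite_adj_sum_perm_gap_mul_gap G huv
    · exact (mul_zero _).symm
  simp only [hsq, sum_comm (s := (univ : Finset (Perm (Fin n)))), sum_ite_irrel, sum_const_zero,
    h, ← mul_sum, sum_sum_ite_adj_add_mul_degree_add_degree]
  ring

end Arrangement

end LinearArrangement

open LinearArrangement

theorem variance_sum_edge_lengths_tree_general (n : ℕ) (G : SimpleGraph (Fin n))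
    [DecidableRel G.Adj] (hG : G.IsTree) :
    (∑ π : Equiv.Perm (Fin n),
        ((∑ u : Fin n, ∑ v : Fin n,
          if G.Adj u v then |((π u : ℕ) : ℚ) - ((π v : ℕ) : ℚ)| else 0) / 2) ^ 2)
      / (Nat.factorial n : ℚ)
      - ((∑ π : Equiv.Perm (Fin n),
          (∑ u : Fin n, ∑ v : Fin n,
            if G.Adj u v then |((π u : ℕ) : ℚ) - ((π v : ℕ) : ℚ)| else 0) / 2)
          / (Nat.factorial n : ℚ)) ^ 2
      = (((n : ℚ) + 1) / 45) *
          (((n : ℚ) - 1) ^ 2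
            + ((n : ℚ) / 4 - 1) * ∑ i : Fin n, (G.degree i : ℚ) ^ 2) := by
  have hm : (#G.edgeFinset : ℚ) = n - 1 := by
    rw [eq_sub_iff_add_eq]; exact_mod_cast (Fintype.card_fin n) ▸ hG.card_edgeFinset
  change (∑ π, (dartGapSum G π / 2) ^ 2) / n.factorial
    - ((∑ π, dartGapSum G π / 2) / n.factorial) ^ 2 = _
  simp only [div_pow, ← sum_div, sum_perm_dartGapSum_sq, sum_perm_dartGapSum, hm]
  unfold meanGap meanGapSq meanGapMulGapAdjacent meanGapMulGapDisjoint
  field_simp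
  ring

/-- For a tree on `n ≥ 2` vertices with sum of squared degrees `K = Σ_i k_i^2`, the
variance of the sum of edge lengths `D` in a uniformly random linear arrangement is
`V[D] = ((n+1)/45)[(n-1)^2 + (n/4 - 1) K]`. -/
theorem variance_sum_edge_lengths_tree (n : ℕ) (hn : 2 ≤ n) (G : SimpleGraph (Fin n))
    [DecidableRel G.Adj] (hG : G.IsTree) :
    (∑ π : Equiv.Perm (Fin n),
        ((∑ u : Fin n, ∑ v : Fin n,
          if G.Adj u v then |((π u : ℕ) : ℚ) - ((π v : ℕ) : ℚ)| else 0) / 2) ^ 2)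
      / (Nat.factorial n : ℚ)
      - ((∑ π : Equiv.Perm (Fin n),
          (∑ u : Fin n, ∑ v : Fin n,
            if G.Adj u v then |((π u : ℕ) : ℚ) - ((π v : ℕ) : ℚ)| else 0) / 2)
          / (Nat.factorial n : ℚ)) ^ 2
      = (((n : ℚ) + 1) / 45) *
          (((n : ℚ) - 1) ^ 2
            + ((n : ℚ) / 4 - 1) * ∑ i : Fin n, (G.degree i : ℚ) ^ 2) :=
  variance_sum_edge_lengths_tree_general n G hG
end

section
/- For the star tree S_n on n ≥ 1 vertices (one hub adjacent to the other n-1 leaves), in any linear arrangement in which the hub is at position τ (1 ≤ τ ≤ n), the sum of edge lengths equals D_τ = τ^2 - (n+1)τ + n(n+1)/2. Consequently, E[D^2] over a uniformly random arrangement equals (1/n) Σ_{τ=1}^n D_τ^2 = (n+1)(n-1)(7n^2 - 8)/60, and V[D] = (n+1)(n-1)(n+2)(n-2)/180. -/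
/-!
Summing `|k - t|` over all positions `k` splits at the hub's position `t` into two arithmetic
series, which gives the quadratic `D_τ`. Composing a permutation with a transposition moves the
hub to any prescribed vertex, so `π h` is uniform on positions when `π` is uniform; hence the
moments of `D` are averages of powers of `D_τ` over `τ`, which Faulhaber's formulas up to fourth
powers evaluate.
-/

open Finset

section PowerSums

variable {K : Type*} [Field K] [CharZero K]

lemma sum_range_cast (n : ℕ) : ∑ k ∈ range n, (k : K) = n * (n - 1) / 2 := by
  induction n with
  | zero => simp
  | succ m ih => rw [sum_range_succ, ih]; push_cast; ring

lemma sum_range_cast_sq (n : ℕ) : ∑ k ∈ range n, (k : K) ^ 2 = n * (n - 1) * (2 * n - 1) / 6 := by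
  induction n with
  | zero => simp
  | succ m ih => rw [sum_range_succ, ih]; push_cast; ring

lemma sum_range_cast_pow_three (n : ℕ) : ∑ k ∈ range n, (k : K) ^ 3 = (n * (n - 1) / 2) ^ 2 := by
  induction n with
  | zero => simp
  | succ m ih => rw [sum_range_succ, ih]; push_cast; ring

lemma sum_range_cast_pow_four (n : ℕ) :
    ∑ k ∈ range n, (k : K) ^ 4 = n * (n - 1) * (2 * n - 1) * (3 * n ^ 2 - 3 * n - 1) / 30 := by
  induction n with
  | zero => simp
  | succ m ih => rw [sum_range_succ, ih]; push_cast; ring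

end PowerSums

lemma sum_range_abs_sub_cast {K : Type*} [Field K] [LinearOrder K] [IsStrictOrderedRing K]
    {t n : ℕ} (htn : t ≤ n) :
    ∑ k ∈ range n, |(k : K) - t| = (t * (t + 1) + (n - t) * (n - t - 1)) / 2 := by
  induction n, htn using Nat.le_induction with
  | base =>
    have hbelow : ∀ k ∈ range t, |(k : K) - t| = t - k := fun k hk => by
      rw [abs_sub_comm, abs_of_nonneg (sub_nonneg.2 (by exact_mod_cast (mem_range.1 hk).le))]
    rw [sum_congr rfl hbelow, sum_sub_distrib, sum_const, card_range, nsmul_eq_mul,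
      sum_range_cast]
    ring
  | succ n htn ih =>
    have hnt : (t : K) ≤ n := by exact_mod_cast htn
    rw [sum_range_succ, ih, abs_of_nonneg (sub_nonneg.2 hnt)]
    push_cast
    ring

section Permutations

open Equiv
open scoped Nat

lemma card_smul_sum_perm_apply {α M : Type*} [Fintype α] [DecidableEq α] [AddCommMonoid M]
    (a : α) (g : α → M) :
    Fintype.card α • ∑ σ : Perm α, g (σ a) = (Fintype.card α)! • ∑ x, g x := by
  have hindep : ∀ b, ∑ σ : Perm α, g (σ b) = ∑ σ : Perm α, g (σ a) := fun b =>
    Fintype.sum_equiv (Equiv.mulRight (swap a b)) _ _ fun σ => by simp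
  calc Fintype.card α • ∑ σ : Perm α, g (σ a)
      = ∑ b, ∑ σ : Perm α, g (σ b) := by simp [hindep]
    _ = ∑ σ : Perm α, ∑ b, g (σ b) := sum_comm
    _ = ∑ _σ : Perm α, ∑ x, g x := sum_congr rfl fun σ _ => Equiv.sum_comp σ g
    _ = (Fintype.card α)! • ∑ x, g x := by simp [Fintype.card_perm]

lemma sum_perm_apply_div_factorial {α K : Type*} [Fintype α] [DecidableEq α] [Field K]
    [CharZero K] (a : α) (g : α → K) :
    (∑ σ : Perm α, g (σ a)) / (Fintype.card α)! = (∑ x, g x) / Fintype.card α := by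
  have hcard : (Fintype.card α : K) ≠ 0 := Nat.cast_ne_zero.2 (Fintype.card_pos_iff.2 ⟨a⟩).ne'
  have hsmul := card_smul_sum_perm_apply a g
  rw [nsmul_eq_mul, nsmul_eq_mul] at hsmul
  rw [div_eq_div_iff (Nat.cast_ne_zero.2 (Nat.factorial_ne_zero _)) hcard, mul_comm, hsmul,
    mul_comm]

end Permutations

/-- The paper's `D_τ`; positions are `1, …, n`, so the hub of `π` sits at `τ = π h + 1`. -/
def starEdgeLengthSum (n : ℕ) (τ : ℚ) : ℚ := τ ^ 2 - (n + 1) * τ + n * (n + 1) / 2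

lemma starEdgeLengthSum_add_one (n : ℕ) (k : ℚ) :
    starEdgeLengthSum n (k + 1) = k ^ 2 - (n - 1) * k + n * (n - 1) / 2 := by
  unfold starEdgeLengthSum; ring

lemma sum_erase_abs_sub_eq_starEdgeLengthSum {n : ℕ} (π : Equiv.Perm (Fin n)) (h : Fin n) :
    ∑ v ∈ univ.erase h, |((π v : ℕ) : ℚ) - ((π h : ℕ) : ℚ)|
      = starEdgeLengthSum n (((π h : ℕ) : ℚ) + 1) := by
  rw [sum_erase _ (by simp),
    Equiv.sum_comp π (fun w : Fin n => |((w : ℕ) : ℚ) - ((π h : ℕ) : ℚ)|),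
    Fin.sum_univ_eq_sum_range (fun k => |(k : ℚ) - ((π h : ℕ) : ℚ)|) n,
    sum_range_abs_sub_cast (π h).isLt.le, starEdgeLengthSum_add_one]
  ring

lemma sum_range_starEdgeLengthSum (n : ℕ) :
    ∑ k ∈ range n, starEdgeLengthSum n (k + 1) = n * (n + 1) * (n - 1) / 3 := by
  simp only [starEdgeLengthSum_add_one, sum_add_distrib, sum_sub_distrib, ← mul_sum, sum_const,
    card_range, nsmul_eq_mul, sum_range_cast_sq, sum_range_cast]
  ring

lemma sum_range_starEdgeLengthSum_sq (n : ℕ) :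
    ∑ k ∈ range n, starEdgeLengthSum n (k + 1) ^ 2
      = n * ((n + 1) * (n - 1) * (7 * n ^ 2 - 8) / 60) := by
  have hexpand : ∀ k : ℕ, starEdgeLengthSum n (k + 1) ^ 2
      = (k : ℚ) ^ 4 - 2 * (n - 1) * (k : ℚ) ^ 3 + (n - 1) * (2 * n - 1) * (k : ℚ) ^ 2
        - n * (n - 1) ^ 2 * k + (n * (n - 1) / 2) ^ 2 := fun k => by
    rw [starEdgeLengthSum_add_one]; ring
  simp only [hexpand, sum_add_distrib, sum_sub_distrib, ← mul_sum, sum_const, card_range,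
    nsmul_eq_mul, sum_range_cast_pow_four, sum_range_cast_pow_three, sum_range_cast_sq,
    sum_range_cast]
  ring

theorem star_tree_sum_edge_lengths_general (n : ℕ) (h : Fin n) :
    (∀ π : Equiv.Perm (Fin n),
        ∑ v ∈ Finset.univ.erase h, |((π v : ℕ) : ℚ) - ((π h : ℕ) : ℚ)|
          = (((π h : ℕ) : ℚ) + 1) ^ 2 - ((n : ℚ) + 1) * (((π h : ℕ) : ℚ) + 1)
            + (n : ℚ) * ((n : ℚ) + 1) / 2) ∧
    (1 / (n : ℚ)) * (∑ τ ∈ Finset.Icc 1 n,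
        ((τ : ℚ) ^ 2 - ((n : ℚ) + 1) * (τ : ℚ) + (n : ℚ) * ((n : ℚ) + 1) / 2) ^ 2)
      = ((n : ℚ) + 1) * ((n : ℚ) - 1) * (7 * (n : ℚ) ^ 2 - 8) / 60 ∧
    (∑ π : Equiv.Perm (Fin n),
        (∑ v ∈ Finset.univ.erase h, |((π v : ℕ) : ℚ) - ((π h : ℕ) : ℚ)|) ^ 2)
        / (Nat.factorial n : ℚ)
      - ((∑ π : Equiv.Perm (Fin n),
          ∑ v ∈ Finset.univ.erase h, |((π v : ℕ) : ℚ) - ((π h : ℕ) : ℚ)|)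
          / (Nat.factorial n : ℚ)) ^ 2
      = ((n : ℚ) + 1) * ((n : ℚ) - 1) * ((n : ℚ) + 2) * ((n : ℚ) - 2) / 180 := by
  have hn : (n : ℚ) ≠ 0 := Nat.cast_ne_zero.2 (Fin.pos h).ne'
  have hD := fun π => sum_erase_abs_sub_eq_starEdgeLengthSum π h
  have hmean : ∀ g : ℚ → ℚ, (∑ π : Equiv.Perm (Fin n), g (((π h : ℕ) : ℚ) + 1)) / n.factorial
      = (∑ k ∈ range n, g ((k : ℚ) + 1)) / n := fun g => by
    simpa [Fin.sum_univ_eq_sum_range (fun k => g ((k : ℚ) + 1))] using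
      sum_perm_apply_div_factorial h (fun t => g (((t : ℕ) : ℚ) + 1))
  refine ⟨hD, ?_, ?_⟩
  · have hIcc : ∑ τ ∈ Icc 1 n, starEdgeLengthSum n τ ^ 2
        = ∑ k ∈ range n, starEdgeLengthSum n ((k + 1 : ℕ) : ℚ) ^ 2 := by
      rw [range_eq_Ico, sum_Ico_add' (fun τ : ℕ => starEdgeLengthSum n τ ^ 2), zero_add,
        Ico_add_one_right_eq_Icc]
    change 1 / (n : ℚ) * ∑ τ ∈ Icc 1 n, starEdgeLengthSum n τ ^ 2 = _
    rw [hIcc]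
    push_cast
    rw [sum_range_starEdgeLengthSum_sq]
    field_simp
  · simp only [hD, hmean fun τ => starEdgeLengthSum n τ ^ 2, hmean (starEdgeLengthSum n),
      sum_range_starEdgeLengthSum_sq, sum_range_starEdgeLengthSum]
    field_simp
    ring

/-- For the star tree `S_n` on `n ≥ 1` vertices with hub `h`:
(1) in any linear arrangement `π`, the sum of edge lengths equals
`τ² - (n+1)τ + n(n+1)/2` where `τ = π h + 1` is the position of the hub;
(2) `(1/n) Σ_{τ=1}^n D_τ² = (n+1)(n-1)(7n²-8)/60`;
(3) the variance of `D` in a uniformly random linear arrangement equals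
`(n+1)(n-1)(n+2)(n-2)/180`. -/
theorem star_tree_sum_edge_lengths (n : ℕ) (hn : 1 ≤ n) (h : Fin n) :
    (∀ π : Equiv.Perm (Fin n),
        ∑ v ∈ Finset.univ.erase h, |((π v : ℕ) : ℚ) - ((π h : ℕ) : ℚ)|
          = (((π h : ℕ) : ℚ) + 1) ^ 2 - ((n : ℚ) + 1) * (((π h : ℕ) : ℚ) + 1)
            + (n : ℚ) * ((n : ℚ) + 1) / 2) ∧
    (1 / (n : ℚ)) * (∑ τ ∈ Finset.Icc 1 n,
        ((τ : ℚ) ^ 2 - ((n : ℚ) + 1) * (τ : ℚ) + (n : ℚ) * ((n : ℚ) + 1) / 2) ^ 2)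
      = ((n : ℚ) + 1) * ((n : ℚ) - 1) * (7 * (n : ℚ) ^ 2 - 8) / 60 ∧
    (∑ π : Equiv.Perm (Fin n),
        (∑ v ∈ Finset.univ.erase h, |((π v : ℕ) : ℚ) - ((π h : ℕ) : ℚ)|) ^ 2)
        / (Nat.factorial n : ℚ)
      - ((∑ π : Equiv.Perm (Fin n),
          ∑ v ∈ Finset.univ.erase h, |((π v : ℕ) : ℚ) - ((π h : ℕ) : ℚ)|)
          / (Nat.factorial n : ℚ)) ^ 2
      = ((n : ℚ) + 1) * ((n : ℚ) - 1) * ((n : ℚ) + 2) * ((n : ℚ) - 2) / 180 :=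
  star_tree_sum_edge_lengths_general n h
end
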